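/- Let m be even and q a positive integer. If the homogeneous polynomial x ↦ H_m x^m of the m-th order Hankel tensor generated by h is a sum of squares of polynomials, then the polynomial y ↦ H_{qm} y^{qm} of the (qm)-th order Hankel tensor with the same generating vector is also a sum of squares, with the number of squares needed no larger. -/

import Mathlib

/-!
Substituting the entries of the `q`-fold self-convolution `y^{*q}` for `x` turns the `m`-th order
Hankel form into the `(qm)`-th order one: splitting an index `i : Fin (qm) → Fin k` into `m` blocks
of length `q`, the block sums `s_j` are indices into `Fin n` (this is where `n = q(k-1)+1` enters),
and grouping the terms by `(s_j)_j` produces `∏_j (y^{*q})_{s_j}`. Hence every square `p_i(x)²` in a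
decomposition of `H_m x^m` gives the square `p_i(y^{*q})²`, a polynomial in `y`.
-/

open Finset MvPolynomial

section HankelForm

variable {R : Type*} [CommSemiring R]

def hankelForm {n : ℕ} (h : ℕ → R) (m : ℕ) (x : Fin n → R) : R :=
  ∑ i : Fin m → Fin n, h (∑ j, (i j : ℕ)) * ∏ j, x (i j)

def selfConv (q n : ℕ) {k : ℕ} (y : Fin k → R) (s : Fin n) : R :=
  ∑ g ∈ univ.filter (fun g : Fin q → Fin k => ∑ t, (g t : ℕ) = s), ∏ t, y (g t)

lemma eval_selfConv_X (q n : ℕ) {k : ℕ} (y : Fin k → R) (s : Fin n) :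
    eval y (selfConv q n X s) = selfConv q n y s := by
  simp only [selfConv, map_sum, map_prod, eval_X]

lemma hankelForm_mul_eq_sum_blocks (h : ℕ → R) (m q : ℕ) {k : ℕ} (y : Fin k → R) :
    hankelForm h (q * m) y
      = ∑ F : Fin m → Fin q → Fin k, h (∑ j, ∑ t, (F j t : ℕ)) * ∏ j, ∏ t, y (F j t) := by
  let e : Fin m × Fin q ≃ Fin (q * m) := (Equiv.prodComm _ _).trans finProdFinEquiv
  refine Fintype.sum_equiv ((e.symm.arrowCongr (Equiv.refl _)).trans (Equiv.curry _ _ _)) _ _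
    fun i => ?_
  rw [← e.sum_comp, ← e.prod_comp, Fintype.sum_prod_type, Fintype.prod_prod_type]
  rfl

lemma prod_selfConv (q : ℕ) {m n k : ℕ} (y : Fin k → R) (i : Fin m → Fin n) :
    ∏ j, selfConv q n y (i j)
      = ∑ F ∈ univ.filter (fun F : Fin m → Fin q → Fin k => ∀ j, ∑ t, (F j t : ℕ) = i j),
          ∏ j, ∏ t, y (F j t) := by
  simp only [selfConv, prod_univ_sum]
  congr 1
  ext F
  simp [Fintype.mem_piFinset]

lemma hankelForm_selfConv (h : ℕ → R) (m : ℕ) {q k n : ℕ} (hn : q * (k - 1) < n)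
    (y : Fin k → R) :
    hankelForm h (q * m) y = hankelForm h m (selfConv q n y) := by
  have hlt (g : Fin q → Fin k) : ∑ t, (g t : ℕ) < n :=
    calc ∑ t, (g t : ℕ) ≤ ∑ _t : Fin q, (k - 1) := sum_le_sum fun t _ => by omega
      _ = q * (k - 1) := by simp
      _ < n := hn
  let D (F : Fin m → Fin q → Fin k) (j : Fin m) : Fin n := ⟨∑ t, (F j t : ℕ), hlt (F j)⟩
  rw [hankelForm_mul_eq_sum_blocks, hankelForm, ← sum_fiberwise univ D]
  refine sum_congr rfl fun i _ => ?_
  have hfiber : univ.filter (fun F => D F = i)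
      = univ.filter (fun F : Fin m → Fin q → Fin k => ∀ j, ∑ t, (F j t : ℕ) = i j) := by
    simp [D, funext_iff, Fin.ext_iff]
  rw [prod_selfConv, mul_sum, hfiber]
  refine sum_congr rfl fun F hF => ?_
  simp only [(mem_filter.mp hF).2]

end HankelForm

theorem stmt6_general (m q k n : ℕ)
    (hn : n = q * (k - 1) + 1) (h : ℕ → ℝ)
    (r : ℕ) (p : Fin r → MvPolynomial (Fin n) ℝ)
    (hsos : ∀ x : Fin n → ℝ,
      ∑ i : Fin m → Fin n, h (∑ j, (i j : ℕ)) * ∏ j, x (i j)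
        = ∑ i, (MvPolynomial.eval x (p i)) ^ 2) :
    ∃ r' ≤ r, ∃ p' : Fin r' → MvPolynomial (Fin k) ℝ,
      ∀ y : Fin k → ℝ,
        ∑ i : Fin (q * m) → Fin k, h (∑ j, (i j : ℕ)) * ∏ j, y (i j)
          = ∑ i, (MvPolynomial.eval y (p' i)) ^ 2 := by
  refine ⟨r, le_rfl, fun i => bind₁ (selfConv q n X) (p i), fun y => ?_⟩
  have hconv : hankelForm h (q * m) y = hankelForm h m (selfConv q n y) :=
    hankelForm_selfConv h m (hn ▸ Nat.lt_succ_self _) y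
  have heval (i : Fin r) :
      eval y (bind₁ (selfConv q n X) (p i)) = eval (selfConv q n y) (p i) :=
    (eval₂Hom_bind₁ (RingHom.id ℝ) y _ (p i)).trans
      (congrArg (eval · (p i)) (funext (eval_selfConv_X q n y)))
  simp only [heval]
  exact hconv.trans (hsos _)

theorem stmt6 (m q k n : ℕ) (hme : Even m) (hm : 0 < m) (hq : 0 < q) (hk : 0 < k)
    (hn : n = q * (k - 1) + 1) (h : ℕ → ℝ)
    (r : ℕ) (p : Fin r → MvPolynomial (Fin n) ℝ)
    (hsos : ∀ x : Fin n → ℝ,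
      ∑ i : Fin m → Fin n, h (∑ j, (i j : ℕ)) * ∏ j, x (i j)
        = ∑ i, (MvPolynomial.eval x (p i)) ^ 2) :
    ∃ r' ≤ r, ∃ p' : Fin r' → MvPolynomial (Fin k) ℝ,
      ∀ y : Fin k → ℝ,
        ∑ i : Fin (q * m) → Fin k, h (∑ j, (i j : ℕ)) * ∏ j, y (i j)
          = ∑ i, (MvPolynomial.eval y (p' i)) ^ 2 :=
  stmt6_general m q k n hn h r p hsos
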